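/- arXiv:1410.6637 — 4 statements merged into one kernel-verified Lean document; each statement's English description precedes it below -/
import Mathlib

section
/- For time-dependent matrices m1, m2 (matrix-valued functions of two time variables on an interval I), the ★-product defined by (m2 ★ m1)(t',t) = ∫_t^{t'} m2(t',τ) m1(τ,t) dτ is associative: (m3 ★ m2) ★ m1 = m3 ★ (m2 ★ m1). -/
/-!
Unfolding both sides and moving the outer factor inside the inner integral (continuity gives the
integrability this needs in a noncommutative algebra), each side becomes an iterated integral of
`m3 t' τ * (m2 τ σ * m1 σ t)` over the triangle where `σ` lies between `t` and `τ`, taken in the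
two possible orders. They agree by Fubini on the square, applied to the integrand cut off by the
indicator of `{σ ≤ τ}`.
-/

open MeasureTheory intervalIntegral

attribute [local instance] Matrix.linftyOpNormedRing Matrix.linftyOpNormedAlgebra

/-- The ★-product of time-dependent matrices:
`(m2 ★ m1)(t',t) = ∫_t^{t'} m2(t',τ) * m1(τ,t) dτ`. -/
noncomputable def starProd {n : ℕ} (m2 m1 : ℝ → ℝ → Matrix (Fin n) (Fin n) ℂ) :
    ℝ → ℝ → Matrix (Fin n) (Fin n) ℂ :=
  fun t' t => ∫ τ in t..t', m2 t' τ * m1 τ t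

open Set Function

namespace intervalIntegral

variable {A : Type*} [NormedRing A] [NormedAlgebra ℝ A] {f : ℝ → A} {μ : Measure ℝ} {a b : ℝ}

theorem integral_const_mul_of_intervalIntegrable (hf : IntervalIntegrable f μ a b) (c : A) :
    ∫ x in a..b, c * f x ∂μ = c * ∫ x in a..b, f x ∂μ := by
  simp only [intervalIntegral, integral_const_mul_of_integrable hf.1,
    integral_const_mul_of_integrable hf.2, mul_sub]

theorem integral_mul_const_of_intervalIntegrable (hf : IntervalIntegrable f μ a b) (c : A) :
    ∫ x in a..b, f x * c ∂μ = (∫ x in a..b, f x ∂μ) * c := by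
  simp only [intervalIntegral, integral_mul_const_of_integrable hf.1,
    integral_mul_const_of_integrable hf.2, sub_mul]

theorem integral_indicator_Ici {E : Type*} [NormedAddCommGroup E] [NormedSpace ℝ E]
    [NullSingletonClass μ] {f : ℝ → E} {c : ℝ} (h : c ∈ Icc a b) :
    ∫ x in a..b, (Ici c).indicator f x ∂μ = ∫ x in c..b, f x ∂μ := by
  have hIoi : Ioi c ∩ Ioc a b = Ioc c b := by rw [inter_comm, Ioc_inter_Ioi, sup_eq_right.2 h.1]
  have hset : (Ici c ∩ Ioc a b : Set ℝ) =ᵐ[μ] Ioc c b :=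
    hIoi ▸ (Ioi_ae_eq_Ici (μ := μ)).symm.inter (ae_eq_refl (Ioc a b))
  rw [integral_of_le (h.1.trans h.2), integral_of_le h.2,
    MeasureTheory.integral_indicator measurableSet_Ici, Measure.restrict_restrict measurableSet_Ici,
    setIntegral_congr_set hset]

end intervalIntegral

section Triangle

variable {E : Type*} [NormedAddCommGroup E] [NormedSpace ℝ E] {f : ℝ → ℝ → E}

theorem intervalIntegral_triangle_swap_of_le (hf : Continuous (uncurry f)) {a b : ℝ}
    (hab : a ≤ b) :
    ∫ x in a..b, ∫ y in a..x, f x y = ∫ y in a..b, ∫ x in y..b, f x y := by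
  set F : ℝ → ℝ → E := fun x y => {y | y ≤ x}.indicator (f x) y
  have hF : IntegrableOn (uncurry F) (uIoc a b ×ˢ uIoc a b) := by
    refine IntegrableOn.indicator (f := uncurry f) ?_
      (measurableSet_le measurable_snd measurable_fst)
    exact (hf.continuousOn.integrableOn_compact (isCompact_uIcc.prod isCompact_uIcc)).mono_set
      (prod_mono uIoc_subset_uIcc uIoc_subset_uIcc)
  have inner_y : ∀ x ∈ uIcc a b, ∫ y in a..b, F x y = ∫ y in a..x, f x y := fun x hx =>
    intervalIntegral.integral_indicator (by rwa [uIcc_of_le hab] at hx)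
  have inner_x : ∀ y ∈ uIcc a b, ∫ x in a..b, F x y = ∫ x in y..b, f x y := fun y hy => by
    rw [← intervalIntegral.integral_indicator_Ici (f := fun x => f x y)
      (by rwa [uIcc_of_le hab] at hy)]
    rfl
  calc ∫ x in a..b, ∫ y in a..x, f x y = ∫ x in a..b, ∫ y in a..b, F x y :=
        intervalIntegral.integral_congr fun x hx => (inner_y x hx).symm
    _ = ∫ y in a..b, ∫ x in a..b, F x y := intervalIntegral_intervalIntegral_swap hF
    _ = ∫ y in a..b, ∫ x in y..b, f x y := intervalIntegral.integral_congr inner_x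

theorem intervalIntegral_triangle_swap (hf : Continuous (uncurry f)) (a b : ℝ) :
    ∫ x in a..b, ∫ y in a..x, f x y = ∫ y in a..b, ∫ x in y..b, f x y := by
  rcases le_total a b with hab | hba
  · exact intervalIntegral_triangle_swap_of_le hf hab
  · -- reversing all four orientations gives the case `b ≤ a` with the roles of `x`, `y` exchanged
    have := intervalIntegral_triangle_swap_of_le (f := fun x y => f y x)
      (hf.comp continuous_swap) hba
    simp only [intervalIntegral.integral_symm _ a, intervalIntegral.integral_symm b,
      intervalIntegral.integral_neg, neg_neg]
    exact this.symm

end Triangle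

section StarProd

variable {n : ℕ} {m1 m2 m3 : ℝ → ℝ → Matrix (Fin n) (Fin n) ℂ}

theorem starProd_starProd_left (h2 : Continuous (uncurry m2)) (h3 : Continuous (uncurry m3))
    (t' t : ℝ) :
    starProd (starProd m3 m2) m1 t' t =
      ∫ σ in t..t', ∫ τ in σ..t', m3 t' τ * (m2 τ σ * m1 σ t) := by
  refine intervalIntegral.integral_congr fun σ _ => ?_
  simp only [starProd, ← mul_assoc]
  exact (intervalIntegral.integral_mul_const_of_intervalIntegrable
    (((h3.uncurry_left t').mul (h2.uncurry_right σ)).intervalIntegrable σ t') _).symm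

theorem starProd_starProd_right (h1 : Continuous (uncurry m1)) (h2 : Continuous (uncurry m2))
    (t' t : ℝ) :
    starProd m3 (starProd m2 m1) t' t =
      ∫ τ in t..t', ∫ σ in t..τ, m3 t' τ * (m2 τ σ * m1 σ t) :=
  intervalIntegral.integral_congr fun τ _ =>
    (intervalIntegral.integral_const_mul_of_intervalIntegrable
      (((h2.uncurry_left τ).mul (h1.uncurry_right t)).intervalIntegrable t τ) _).symm

end StarProd

theorem starProd_assoc_general {n : ℕ} (I : Set ℝ)
    (m1 m2 m3 : ℝ → ℝ → Matrix (Fin n) (Fin n) ℂ)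
    (h1 : Continuous fun p : ℝ × ℝ => m1 p.1 p.2)
    (h2 : Continuous fun p : ℝ × ℝ => m2 p.1 p.2)
    (h3 : Continuous fun p : ℝ × ℝ => m3 p.1 p.2) :
    ∀ t ∈ I, ∀ t' ∈ I,
      starProd (starProd m3 m2) m1 t' t = starProd m3 (starProd m2 m1) t' t := by
  intro t _ t' _
  have hcont : Continuous (uncurry fun τ σ => m3 t' τ * (m2 τ σ * m1 σ t)) := by fun_prop
  rw [starProd_starProd_left h2 h3, starProd_starProd_right h1 h2,
    intervalIntegral_triangle_swap hcont]

/-- the ★-product is associative for continuous time-dependent matrices. -/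
theorem starProd_assoc {n : ℕ} (I : Set ℝ) (hI : I.OrdConnected)
    (m1 m2 m3 : ℝ → ℝ → Matrix (Fin n) (Fin n) ℂ)
    (h1 : Continuous fun p : ℝ × ℝ => m1 p.1 p.2)
    (h2 : Continuous fun p : ℝ × ℝ => m2 p.1 p.2)
    (h3 : Continuous fun p : ℝ × ℝ => m3 p.1 p.2) :
    ∀ t ∈ I, ∀ t' ∈ I,
      starProd (starProd m3 m2) m1 t' t = starProd m3 (starProd m2 m1) t' t :=
  starProd_assoc_general I m1 m2 m3 h1 h2 h3
end

section
/- Let m be a continuous bounded time-dependent matrix on a finite interval and let h(t',t) = ∑_{k≥1} m^{★k}(t',t). Then h solves the Volterra equation of the second kind h(t',t) = m(t',t) + ∫_t^{t'} m(t',τ) h(τ,t) dτ. -/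
open MeasureTheory intervalIntegral

attribute [local instance] Matrix.linftyOpNormedRing Matrix.linftyOpNormedAlgebra

noncomputable def starPow {n : ℕ} (m : ℝ → ℝ → Matrix (Fin n) (Fin n) ℂ) :
    ℕ → ℝ → ℝ → Matrix (Fin n) (Fin n) ℂ
  | 0 => fun t' t => if t' = t then 1 else 0
  | 1 => m
  | (k + 2) => starProd m (starPow m (k + 1))

/-! Inductively `‖m^{★(k+1)}(t', t)‖ ≤ b^{k+1} |t' - t|^k / k!`, so the Neumann series converges
and the series `∑ₖ m(t', τ) m^{★(k+1)}(τ, t)` is dominated on `[t, t']` by the constants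
`b^{k+2} |t' - t|^k / k!`. Integrating it termwise turns `m ★ ∑ₖ m^{★(k+1)}` into
`∑ₖ m^{★(k+2)}`, which is the Neumann series without its first term `m`. -/

section

open Set Interval

variable {n : ℕ}

theorem continuous_starProd {m2 m1 : ℝ → ℝ → Matrix (Fin n) (Fin n) ℂ}
    (h2 : Continuous (Function.uncurry m2)) (h1 : Continuous (Function.uncurry m1)) :
    Continuous (Function.uncurry (starProd m2 m1)) := by
  set F : ℝ × ℝ → ℝ → Matrix (Fin n) (Fin n) ℂ := fun p τ => m2 p.1 τ * m1 τ p.2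
  have hF : Continuous (Function.uncurry F) :=
    (h2.comp (continuous_fst.fst.prodMk continuous_snd)).mul
      (h1.comp (continuous_snd.prodMk continuous_fst.snd))
  have hsplit : Function.uncurry (starProd m2 m1) =
      fun p => (∫ τ in (0 : ℝ)..p.1, F p τ) - ∫ τ in (0 : ℝ)..p.2, F p τ := by
    funext p
    have hFp : Continuous (F p) := hF.comp (continuous_const.prodMk continuous_id)
    exact (integral_interval_sub_left (hFp.intervalIntegrable _ _)
      (hFp.intervalIntegrable _ _)).symm
  rw [hsplit]
  exact (continuous_parametric_intervalIntegral_of_continuous hF continuous_fst).sub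
    (continuous_parametric_intervalIntegral_of_continuous hF continuous_snd)

theorem continuous_starPow_succ {m : ℝ → ℝ → Matrix (Fin n) (Fin n) ℂ}
    (hm : Continuous (Function.uncurry m)) (k : ℕ) :
    Continuous (Function.uncurry (starPow m (k + 1))) := by
  induction k with
  | zero => exact hm
  | succ k ih => exact continuous_starProd hm ih

theorem summable_pow_succ_mul_pow_div_factorial (b x : ℝ) :
    Summable fun k : ℕ => b ^ (k + 1) * x ^ k / k.factorial :=
  ((Real.summable_pow_div_factorial (b * x)).mul_left b).congr fun k => by
    rw [mul_pow, pow_succ]; ring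

variable {m : ℝ → ℝ → Matrix (Fin n) (Fin n) ℂ} {s : Set ℝ} {b : ℝ}

theorem norm_starPow_succ_le (hs : s.OrdConnected)
    (hb : ∀ t₁ ∈ s, ∀ t₂ ∈ s, ‖m t₂ t₁‖ ≤ b) (k : ℕ) {t t' : ℝ} (ht : t ∈ s) (ht' : t' ∈ s) :
    ‖starPow m (k + 1) t' t‖ ≤ b ^ (k + 1) * |t' - t| ^ k / k.factorial := by
  induction k generalizing t' with
  | zero => simpa [starPow] using hb t ht t' ht'
  | succ k ih =>
    have hb0 : 0 ≤ b := (norm_nonneg _).trans (hb t ht t ht)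
    have hpointwise : ∀ τ ∈ Ι t t',
        ‖m t' τ * starPow m (k + 1) τ t‖ ≤ b ^ (k + 2) / k.factorial * |τ - t| ^ k := by
      intro τ hτ
      have hτs : τ ∈ s := hs.uIcc_subset ht ht' (uIoc_subset_uIcc hτ)
      calc ‖m t' τ * starPow m (k + 1) τ t‖ ≤ ‖m t' τ‖ * ‖starPow m (k + 1) τ t‖ :=
            norm_mul_le _ _
        _ ≤ b * (b ^ (k + 1) * |τ - t| ^ k / k.factorial) :=
            mul_le_mul (hb τ hτs t' ht') (ih hτs) (norm_nonneg _) hb0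
        _ = b ^ (k + 2) / k.factorial * |τ - t| ^ k := by ring
    calc ‖starPow m (k + 2) t' t‖ = ‖∫ τ in Ι t t', m t' τ * starPow m (k + 1) τ t‖ :=
          norm_integral_eq_norm_integral_uIoc _
      _ ≤ ∫ τ in Ι t t', b ^ (k + 2) / k.factorial * |τ - t| ^ k :=
          norm_integral_le_of_norm_le (by fun_prop : Continuous _).integrableOn_uIoc
            (ae_restrict_of_forall_mem measurableSet_uIoc hpointwise)
      _ = b ^ (k + 2) * |t' - t| ^ (k + 1) / (k + 1).factorial := by
          rw [MeasureTheory.integral_const_mul, integral_pow_abs_sub_uIoc, Nat.factorial_succ]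
          push_cast
          field_simp

theorem summable_starPow_succ (hs : s.OrdConnected)
    (hb : ∀ t₁ ∈ s, ∀ t₂ ∈ s, ‖m t₂ t₁‖ ≤ b) {t t' : ℝ} (ht : t ∈ s) (ht' : t' ∈ s) :
    Summable fun k : ℕ => starPow m (k + 1) t' t :=
  (summable_pow_succ_mul_pow_div_factorial b |t' - t|).of_norm_bounded
    fun k => norm_starPow_succ_le hs hb k ht ht'

theorem hasSum_starPow_succ_succ (hm : Continuous (Function.uncurry m)) (hs : s.OrdConnected)
    (hb : ∀ t₁ ∈ s, ∀ t₂ ∈ s, ‖m t₂ t₁‖ ≤ b) {t t' : ℝ} (ht : t ∈ s) (ht' : t' ∈ s) :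
    HasSum (fun k : ℕ => starPow m (k + 2) t' t)
      (∫ τ in t..t', m t' τ * ∑' k : ℕ, starPow m (k + 1) τ t) := by
  have hb0 : 0 ≤ b := (norm_nonneg _).trans (hb t ht t ht)
  have hmem : ∀ τ ∈ Ι t t', τ ∈ s := fun τ hτ => hs.uIcc_subset ht ht' (uIoc_subset_uIcc hτ)
  refine hasSum_integral_of_dominated_convergence
    (fun k _ => b * (b ^ (k + 1) * |t' - t| ^ k / k.factorial)) (fun k => ?_) (fun k => ?_)
    (.of_forall fun _ _ => (summable_pow_succ_mul_pow_div_factorial b _).mul_left b)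
    intervalIntegrable_const (.of_forall fun τ hτ => ?_)
  · have hcont : Continuous fun τ => m t' τ * starPow m (k + 1) τ t :=
      (hm.comp (continuous_const.prodMk continuous_id)).mul
        ((continuous_starPow_succ hm k).comp (continuous_id.prodMk continuous_const))
    exact hcont.integrableOn_uIoc.aestronglyMeasurable
  · refine .of_forall fun τ hτ => ?_
    calc ‖m t' τ * starPow m (k + 1) τ t‖ ≤ ‖m t' τ‖ * ‖starPow m (k + 1) τ t‖ := norm_mul_le _ _
      _ ≤ b * (b ^ (k + 1) * |t' - t| ^ k / k.factorial) := by
        refine mul_le_mul (hb τ (hmem τ hτ) t' ht')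
          ((norm_starPow_succ_le hs hb k ht (hmem τ hτ)).trans ?_) (norm_nonneg _) hb0
        gcongr b ^ (k + 1) * ?_ ^ k / _
        exact abs_sub_left_of_mem_uIcc (uIoc_subset_uIcc hτ)
  · exact (summable_starPow_succ hs hb ht (hmem τ hτ)).hasSum.mul_left (m t' τ)

end

/-- `h(t',t) = ∑_{k≥1} m^{★k}(t',t)` solves the Volterra equation of the
second kind `h(t',t) = m(t',t) + ∫_t^{t'} m(t',τ) h(τ,t) dτ`. -/
theorem neumann_series_solves_volterra {n : ℕ} (a₀ a₁ b : ℝ)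
    (m : ℝ → ℝ → Matrix (Fin n) (Fin n) ℂ)
    (hm : Continuous fun p : ℝ × ℝ => m p.1 p.2)
    (hb : ∀ t₁ ∈ Set.Icc a₀ a₁, ∀ t₂ ∈ Set.Icc a₀ a₁, ‖m t₂ t₁‖ ≤ b)
    (h : ℝ → ℝ → Matrix (Fin n) (Fin n) ℂ)
    (hdef : ∀ t' t, h t' t = ∑' k : ℕ, starPow m (k + 1) t' t) :
    ∀ t ∈ Set.Icc a₀ a₁, ∀ t' ∈ Set.Icc a₀ a₁,
      h t' t = m t' t + ∫ τ in t..t', m t' τ * h τ t := by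
  intro t ht t' ht'
  simp only [hdef]
  rw [(summable_starPow_succ Set.ordConnected_Icc hb ht ht').tsum_eq_zero_add,
    (hasSum_starPow_succ_succ hm Set.ordConnected_Icc hb ht ht').tsum_eq]
  rfl
end

section
/- Entrywise decay bound for time-ordered exponentials of sparse matrices: if H_{βα}(t) = 0 for all t whenever (α,β) is not an edge of a graph G, h = sup_t max_{α,β} |H_{αβ}(t)|, and W_k(α,ω) denotes the number of walks of length k from α to ω in G, then for t ≤ t', |U(t',t)_{ωα}| ≤ ∑_{k ≥ d(α,ω)} h^k (t'-t)^k / k! · W_k(α,ω), where d(α,ω) is the graph distance from α to ω (and U(t',t)_{ωα} = δ_{ωα} contribution handled by the k=0 term when α=ω). -/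
open MeasureTheory

attribute [local instance] Matrix.linftyOpNormedRing Matrix.linftyOpNormedAlgebra

/-!
Let `B = h • A`, a nonnegative entrywise majorant of `H`. By the fundamental theorem of calculus
the moduli `u(s) = (‖U(s)ᵢⱼ‖)ᵢⱼ` satisfy `u(s) ≤ u(t) + ∫ₜˢ B u`, while `v(s) = exp((s - t) B) u(t)`
satisfies the corresponding equality. Because `B ≥ 0`, the total positive part `m` of `u - v`
obeys `m(s) ≤ K ∫ₜˢ m`, so `m = 0` by Grönwall and `u ≤ v`. With `u(t) = 1`, expanding
`exp((t' - t) h A)_{ωα}` as a power series gives the bound; its terms with `(Aᵏ)_{ωα} = 0`,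
in particular those with `k` below the distance from `α` to `ω`, vanish.
-/

open Set intervalIntegral NormedSpace
open scoped Nat

theorem ContinuousOn.hasDerivWithinAt_integral_Icc {E : Type*} [NormedAddCommGroup E]
    [NormedSpace ℝ E] [CompleteSpace E] {f : ℝ → E} {a b x : ℝ}
    (hf : ContinuousOn f (Icc a b)) (hx : x ∈ Icc a b) :
    HasDerivWithinAt (fun s => ∫ r in a..s, f r) (f x) (Icc a b) x :=
  have : Fact (x ∈ Icc a b) := ⟨hx⟩
  integral_hasDerivWithinAt_right
    (hf.mono (uIcc_subset_Icc (left_mem_Icc.2 (hx.1.trans hx.2)) hx)).intervalIntegrable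
    (hf.stronglyMeasurableAtFilter_nhdsWithin measurableSet_Icc x) (hf x hx)

theorem eq_zero_of_le_mul_integral {f : ℝ → ℝ} {K a b : ℝ} (hf : ContinuousOn f (Icc a b))
    (hf₀ : ∀ s ∈ Icc a b, 0 ≤ f s) (hle : ∀ s ∈ Icc a b, f s ≤ K * ∫ r in a..s, f r) :
    ∀ s ∈ Icc a b, f s = 0 := by
  have hF₀ : ∀ s ∈ Icc a b, 0 ≤ ∫ r in a..s, f r := fun s hs =>
    integral_nonneg hs.1 fun r hr => hf₀ r ⟨hr.1, hr.2.trans hs.2⟩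
  have hF : ∀ s ∈ Icc a b, ∫ r in a..s, f r = 0 := by
    refine eq_zero_of_abs_deriv_le_mul_abs_self_of_eq_zero_right (K := K)
      (fun x hx => (hf.hasDerivWithinAt_integral_Icc hx).continuousWithinAt)
      (fun x hx => (hf.hasDerivWithinAt_integral_Icc
        (Ico_subset_Icc_self hx)).mono_of_mem_nhdsWithin
        (Filter.mem_of_superset (Ico_mem_nhdsGE hx.2)
          (Ico_subset_Icc_self.trans (Icc_subset_Icc_left hx.1))))
      integral_same fun x hx => ?_
    rw [Real.norm_of_nonneg (hf₀ x (Ico_subset_Icc_self hx)),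
      Real.norm_of_nonneg (hF₀ x (Ico_subset_Icc_self hx))]
    exact hle x (Ico_subset_Icc_self hx)
  intro s hs
  exact le_antisymm (by simpa [hF s hs] using hle s hs) (hf₀ s hs)

namespace Matrix

variable {V : Type*} [Fintype V]

theorem nonpos_of_le_integral_mul {B : Matrix V V ℝ} (hB : ∀ i j, 0 ≤ B i j)
    {w : ℝ → Matrix V V ℝ} {a b : ℝ} (hw : ContinuousOn w (Icc a b))
    (hle : ∀ s ∈ Icc a b, ∀ i j, w s i j ≤ ∫ r in a..s, (B * w r) i j) :
    ∀ s ∈ Icc a b, ∀ i j, w s i j ≤ 0 := by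
  set m : ℝ → ℝ := fun s => ∑ i, ∑ j, max (w s i j) 0
  have hwm : ∀ s i j, w s i j ≤ m s := fun s i j =>
    (le_max_left _ _).trans <| (Finset.single_le_sum (f := fun j => max (w s i j) 0)
      (fun _ _ => le_max_right _ _) (Finset.mem_univ j)).trans <|
      Finset.single_le_sum (f := fun i => ∑ j, max (w s i j) 0)
        (fun _ _ => Finset.sum_nonneg fun _ _ => le_max_right _ _) (Finset.mem_univ i)
  have hm₀ : ∀ s, 0 ≤ m s := fun s => Finset.sum_nonneg fun _ _ =>
    Finset.sum_nonneg fun _ _ => le_max_right _ _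
  have hm : ContinuousOn m (Icc a b) := by fun_prop
  have hint : ∀ {g : ℝ → ℝ}, ContinuousOn g (Icc a b) → ∀ s ∈ Icc a b,
      IntervalIntegrable g volume a s := fun hg s hs =>
    (hg.mono (uIcc_subset_Icc (left_mem_Icc.2 (hs.1.trans hs.2)) hs)).intervalIntegrable
  have hmle : ∀ s ∈ Icc a b, m s ≤ (∑ i, ∑ _j : V, ∑ k, B i k) * ∫ r in a..s, m r := by
    intro s hs
    have hrow : ∀ i j, max (w s i j) 0 ≤ (∑ k, B i k) * ∫ r in a..s, m r := by
      intro i j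
      refine max_le ?_ (mul_nonneg (Finset.sum_nonneg fun k _ => hB i k)
        (integral_nonneg hs.1 fun r _ => hm₀ r))
      calc w s i j ≤ ∫ r in a..s, (B * w r) i j := hle s hs i j
        _ ≤ ∫ r in a..s, (∑ k, B i k) * m r := by
          refine integral_mono_on hs.1 (hint (by fun_prop) s hs) (hint (by fun_prop) s hs)
            fun r _ => ?_
          rw [mul_apply, Finset.sum_mul]
          exact Finset.sum_le_sum fun k _ => mul_le_mul_of_nonneg_left (hwm r k j) (hB i k)
        _ = (∑ k, B i k) * ∫ r in a..s, m r := integral_const_mul _ _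
    calc m s ≤ ∑ i, ∑ _j : V, (∑ k, B i k) * ∫ r in a..s, m r :=
          Finset.sum_le_sum fun i _ => Finset.sum_le_sum fun j _ => hrow i j
      _ = _ := by simp only [Finset.sum_mul]
  intro s hs i j
  linarith [hwm s i j, eq_zero_of_le_mul_integral hm (fun s _ => hm₀ s) hmle s hs]

variable [DecidableEq V]

theorem _root_.HasDerivAt.matrix_apply {𝕜 : Type*} [RCLike 𝕜] {f : ℝ → Matrix V V 𝕜}
    {f' : Matrix V V 𝕜} {x : ℝ} (hf : HasDerivAt f f' x) (i j : V) :
    HasDerivAt (fun y => f y i j) (f' i j) x :=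
  (entryLinearMap ℝ 𝕜 i j).toContinuousLinearMap.hasFDerivAt.comp_hasDerivAt x hf

theorem norm_apply_le_add_integral {𝕜 : Type*} [RCLike 𝕜] {H U : ℝ → Matrix V V 𝕜}
    {B : Matrix V V ℝ} {a b : ℝ} (hH : ContinuousOn H (Icc a b))
    (hU : ∀ s ∈ Icc a b, HasDerivAt U (H s * U s) s)
    (hHB : ∀ s ∈ Icc a b, ∀ i k, ‖H s i k‖ ≤ B i k) :
    ∀ s ∈ Icc a b, ∀ i j,
      ‖U s i j‖ ≤ ‖U a i j‖ + ∫ r in a..s, (B * (U r).map norm) i j := by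
  intro s hs i j
  have hsub : uIcc a s ⊆ Icc a b := uIcc_subset_Icc (left_mem_Icc.2 (hs.1.trans hs.2)) hs
  have hUc : ContinuousOn U (uIcc a s) := fun r hr =>
    (hU r (hsub hr)).continuousAt.continuousWithinAt
  have hHs := hH.mono hsub
  have hHU : IntervalIntegrable (fun r => (H r * U r) i j) volume a s :=
    ContinuousOn.intervalIntegrable (by fun_prop)
  have hBU : IntervalIntegrable (fun r => (B * (U r).map norm) i j) volume a s :=
    ContinuousOn.intervalIntegrable (by fun_prop)
  have hFTC : U s i j = U a i j + ∫ r in a..s, (H r * U r) i j := by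
    rw [integral_eq_sub_of_hasDerivAt (fun r hr => (hU r (hsub hr)).matrix_apply i j) hHU]
    ring
  calc ‖U s i j‖ ≤ ‖U a i j‖ + ‖∫ r in a..s, (H r * U r) i j‖ := hFTC ▸ norm_add_le _ _
    _ ≤ ‖U a i j‖ + ∫ r in a..s, ‖(H r * U r) i j‖ := by
      gcongr
      exact norm_integral_le_integral_norm hs.1
    _ ≤ ‖U a i j‖ + ∫ r in a..s, (B * (U r).map norm) i j := by
      gcongr
      refine integral_mono_on hs.1 hHU.norm hBU fun r hr => ?_
      rw [mul_apply, mul_apply]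
      refine (norm_sum_le _ _).trans (Finset.sum_le_sum fun k _ => ?_)
      rw [norm_mul]
      exact mul_le_mul_of_nonneg_right (hHB r (hsub (Icc_subset_uIcc hr)) i k) (norm_nonneg _)

theorem exp_apply_eq_tsum {𝕜 : Type*} [RCLike 𝕜] (M : Matrix V V 𝕜) (i j : V) :
    exp M i j = ∑' k, (M ^ k) i j / k ! := by
  rw [congrFun (exp_eq_tsum 𝕜) M]
  refine ((entryLinearMap 𝕜 𝕜 i j).toContinuousLinearMap.map_tsum
    (expSeries_summable' M)).trans ?_
  simp [div_eq_inv_mul]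

theorem exp_smul_map_natCast_apply (c : ℝ) (A : Matrix V V ℕ) (i j : V) :
    exp (c • A.map ((↑) : ℕ → ℝ)) i j = ∑' k, c ^ k / k ! * ((A ^ k) i j : ℝ) := by
  rw [exp_apply_eq_tsum]
  congr 1 with k
  have hpow : A.map ((↑) : ℕ → ℝ) ^ k = (A ^ k).map (↑) :=
    (Matrix.map_pow A (Nat.castRingHom ℝ) k).symm
  rw [smul_pow, hpow, smul_apply, map_apply, smul_eq_mul]
  ring

theorem exp_smul_mul_apply_eq_add_integral (B Φ : Matrix V V ℝ) (a s : ℝ) (i j : V) :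
    (exp ((s - a) • B) * Φ) i j = Φ i j + ∫ r in a..s, (B * (exp ((r - a) • B) * Φ)) i j := by
  have hderiv : ∀ r, HasDerivAt (fun r => exp ((r - a) • B) * Φ)
      (B * (exp ((r - a) • B) * Φ)) r := fun r => by
    rw [← mul_assoc]
    exact ((hasDerivAt_exp_smul_const' B (r - a)).comp_sub_const r a).mul_const Φ
  have hcont : Continuous fun r => (B * (exp ((r - a) • B) * Φ)) i j :=
    (continuous_const.mul (continuous_iff_continuousAt.2 fun r =>
      (hderiv r).continuousAt)).matrix_elem i j
  rw [integral_eq_sub_of_hasDerivAt (fun r _ => (hderiv r).matrix_apply i j)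
    (hcont.intervalIntegrable a s)]
  simp

theorem le_exp_smul_mul_of_le_add_integral {B : Matrix V V ℝ} (hB : ∀ i j, 0 ≤ B i j)
    {u : ℝ → Matrix V V ℝ} {a b : ℝ} (hu : ContinuousOn u (Icc a b))
    (hle : ∀ s ∈ Icc a b, ∀ i j, u s i j ≤ u a i j + ∫ r in a..s, (B * u r) i j) :
    ∀ s ∈ Icc a b, ∀ i j, u s i j ≤ (exp ((s - a) • B) * u a) i j := by
  set v : ℝ → Matrix V V ℝ := fun s => exp ((s - a) • B) * u a
  have hv : Continuous v := by fun_prop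
  have hdiff : ∀ s ∈ Icc a b, ∀ i j,
      (u s - v s) i j ≤ ∫ r in a..s, (B * (u r - v r)) i j := by
    intro s hs i j
    have hus : ContinuousOn u (uIcc a s) :=
      hu.mono (uIcc_subset_Icc (left_mem_Icc.2 (hs.1.trans hs.2)) hs)
    have hBu : IntervalIntegrable (fun r => (B * u r) i j) volume a s :=
      ContinuousOn.intervalIntegrable (by fun_prop)
    have hBv : IntervalIntegrable (fun r => (B * v r) i j) volume a s :=
      Continuous.intervalIntegrable (by fun_prop) a s
    calc (u s - v s) i j
        ≤ (u a i j + ∫ r in a..s, (B * u r) i j) - (u a i j + ∫ r in a..s, (B * v r) i j) := by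
          have hvs : v s i j = u a i j + ∫ r in a..s, (B * v r) i j :=
            exp_smul_mul_apply_eq_add_integral B (u a) a s i j
          exact hvs ▸ sub_le_sub_right (hle s hs i j) _
      _ = ∫ r in a..s, (B * (u r - v r)) i j := by
          rw [add_sub_add_left_eq_sub, ← integral_sub hBu hBv]
          simp only [Matrix.mul_sub, Matrix.sub_apply]
  intro s hs i j
  exact sub_nonpos.1 <| nonpos_of_le_integral_mul (w := fun s => u s - v s) hB
    (hu.sub hv.continuousOn) hdiff s hs i j

end Matrix

theorem timeOrderedExp_entry_walk_bound_general {V : Type*} [Fintype V] [DecidableEq V]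
    (a₀ a₁ h : ℝ)
    (H : ℝ → Matrix V V ℂ) (hH : ContinuousOn H (Set.Icc a₀ a₁))
    (A : Matrix V V ℕ)
    (hA1 : ∀ β α, (∃ s ∈ Set.Icc a₀ a₁, H s β α ≠ 0) → A β α = 1)
    (hb : ∀ s ∈ Set.Icc a₀ a₁, ∀ β α, ‖H s β α‖ ≤ h)
    (t t' : ℝ) (ht : t ∈ Set.Icc a₀ a₁) (ht' : t' ∈ Set.Icc a₀ a₁) (htt : t ≤ t')
    (U : ℝ → Matrix V V ℂ) (hU0 : U t = 1)
    (hU : ∀ s ∈ Set.Icc a₀ a₁, HasDerivAt U (H s * U s) s)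
    (α ω : V) :
    ‖U t' ω α‖
      ≤ ∑' k : {k : ℕ // sInf {j : ℕ | (A ^ j) ω α ≠ 0} ≤ k},
          h ^ (k : ℕ) * (t' - t) ^ (k : ℕ) / (Nat.factorial k : ℝ)
            * ((A ^ (k : ℕ)) ω α : ℝ) := by
  have hh : 0 ≤ h := (norm_nonneg _).trans (hb t ht α α)
  set B : Matrix V V ℝ := h • A.map (↑)
  have hB : ∀ i j, 0 ≤ B i j := fun i j => mul_nonneg hh (Nat.cast_nonneg _)
  have hHB : ∀ s ∈ Icc a₀ a₁, ∀ i j, ‖H s i j‖ ≤ B i j := by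
    intro s hs i j
    by_cases hij : ∃ r ∈ Icc a₀ a₁, H r i j ≠ 0
    · simpa [B, hA1 i j hij] using hb s hs i j
    · push Not at hij
      simpa [hij s hs] using hB i j
  have hsub : Icc t t' ⊆ Icc a₀ a₁ := Icc_subset_Icc ht.1 ht'.2
  have hUc : ContinuousOn (fun s => (U s).map norm) (Icc t t') := by
    have : ContinuousOn U (Icc t t') := fun s hs =>
      (hU s (hsub hs)).continuousAt.continuousWithinAt
    fun_prop
  have hUB := Matrix.le_exp_smul_mul_of_le_add_integral hB
    (u := fun s => (U s).map norm) (a := t) (b := t') hUc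
    (Matrix.norm_apply_le_add_integral (hH.mono hsub) (fun s hs => hU s (hsub hs))
      fun s hs => hHB s (hsub hs)) t' ⟨htt, le_rfl⟩ ω α
  calc ‖U t' ω α‖ ≤ exp ((t' - t) • B) ω α := by simpa [hU0, Matrix.map_one] using hUB
    _ = ∑' k, h ^ k * (t' - t) ^ k / k ! * ((A ^ k) ω α : ℝ) := by
      rw [smul_smul, Matrix.exp_smul_map_natCast_apply]
      congr 1 with k
      rw [mul_pow]
      ring
    _ = _ := (tsum_subtype_eq_of_support_subset fun k hk =>
      Nat.sInf_le (show (A ^ k) ω α ≠ 0 from fun h0 => hk (by simp [h0]))).symm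

/-- entrywise decay bound for the time-ordered exponential of a sparse
matrix: `|U(t',t)_{ωα}| ≤ ∑_{k ≥ d(α,ω)} h^k (t'-t)^k / k! · W_k(α,ω)`, where
`W_k(α,ω) = (A^k)_{ωα}` counts the walks of length `k` from `α` to `ω` on the sparsity
graph of `H` and `d(α,ω)` is the graph distance. -/
theorem timeOrderedExp_entry_walk_bound {V : Type*} [Fintype V] [DecidableEq V]
    (a₀ a₁ h : ℝ)
    (H : ℝ → Matrix V V ℂ) (hH : ContinuousOn H (Set.Icc a₀ a₁))
    (A : Matrix V V ℕ)
    (hA0 : ∀ β α, (∀ s ∈ Set.Icc a₀ a₁, H s β α = 0) → A β α = 0)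
    (hA1 : ∀ β α, (∃ s ∈ Set.Icc a₀ a₁, H s β α ≠ 0) → A β α = 1)
    (hb : ∀ s ∈ Set.Icc a₀ a₁, ∀ β α, ‖H s β α‖ ≤ h)
    (t t' : ℝ) (ht : t ∈ Set.Icc a₀ a₁) (ht' : t' ∈ Set.Icc a₀ a₁) (htt : t ≤ t')
    (U : ℝ → Matrix V V ℂ) (hU0 : U t = 1)
    (hU : ∀ s ∈ Set.Icc a₀ a₁, HasDerivAt U (H s * U s) s)
    (α ω : V) :
    ‖U t' ω α‖
      ≤ ∑' k : {k : ℕ // sInf {j : ℕ | (A ^ j) ω α ≠ 0} ≤ k},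
          h ^ (k : ℕ) * (t' - t) ^ (k : ℕ) / (Nat.factorial k : ℝ)
            * ((A ^ (k : ℕ)) ω α : ℝ) :=
  timeOrderedExp_entry_walk_bound_general a₀ a₁ h H hH A hA1 hb t t' ht ht' htt U hU0 hU α ω
end

section
/- Super-exponential decay: under the sparse setting with maximum degree Δ of G finite, the entries of the time-ordered exponential satisfy |U(t',t)_{ωα}| ≤ e^{Δh(t'-t)} (Δh(t'-t))^d / d! for t ≤ t', where d = d(α,ω) is the graph distance. -/
/-!
Write `B_d(x) = e^{Kx} (Kx)^d / d!` with `K = Δh`. Since `B_{d+1}' = K B_{d+1} + K B_d ≥ K B_d`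
for `x ≥ 0`, induction on `d` works: if every walk from `α` to `ω` has length at least `d + 1`,
then `ω ≠ α`, so `U_{ωα}` vanishes at `t`, and `(HU)_{ωα}` only involves entries `U_{βα}` with
`H_{ωβ} ≠ 0`, i.e. with `β` at distance at least `d` from `α`. These are bounded by `B_d`, and
the ℓ∞ operator norm of `H` is at most `K`, so the comparison principle for derivatives gives
`|U_{ωα}| ≤ B_{d+1}`. The case `d = 0` is Grönwall's inequality for that norm.
-/

attribute [local instance] Matrix.linftyOpNormedRing Matrix.linftyOpNormedAlgebra

open Set Matrix

open scoped Nat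

namespace Matrix

variable {V α : Type*} [Fintype V] [DecidableEq V] [NormedRing α]

theorem sum_norm_apply_le_linfty_opNorm (M : Matrix V V α) (i : V) :
    ∑ j, ‖M i j‖ ≤ ‖M‖ := by
  rw [linfty_opNorm_def]
  have := NNReal.coe_le_coe.2 (Finset.le_sup (f := fun i => ∑ j, ‖M i j‖₊) (Finset.mem_univ i))
  push_cast at this
  exact this

theorem norm_apply_le_linfty_opNorm (M : Matrix V V α) (i j : V) : ‖M i j‖ ≤ ‖M‖ :=
  (Finset.single_le_sum (fun k _ => norm_nonneg (M i k)) (Finset.mem_univ j)).trans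
    (sum_norm_apply_le_linfty_opNorm M i)

theorem linfty_opNorm_le_of_sum_norm_apply_le {M : Matrix V V α} {c : ℝ} (hc : 0 ≤ c)
    (hM : ∀ i, ∑ j, ‖M i j‖ ≤ c) : ‖M‖ ≤ c := by
  rw [linfty_opNorm_def, ← NNReal.coe_mk c hc, NNReal.coe_le_coe]
  refine Finset.sup_le fun i _ => ?_
  rw [← NNReal.coe_le_coe]
  push_cast
  exact hM i

theorem norm_mul_apply_le_of_forall_ne_zero {M N : Matrix V V α} {i k : V} {c : ℝ} (hc : 0 ≤ c)
    (hN : ∀ j, M i j ≠ 0 → ‖N j k‖ ≤ c) : ‖(M * N) i k‖ ≤ ‖M‖ * c :=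
  calc ‖(M * N) i k‖ ≤ ∑ j, ‖M i j‖ * ‖N j k‖ := by
        rw [mul_apply]
        exact (norm_sum_le _ _).trans (Finset.sum_le_sum fun j _ => norm_mul_le _ _)
    _ ≤ ∑ j, ‖M i j‖ * c := by
        refine Finset.sum_le_sum fun j _ => ?_
        by_cases hj : M i j = 0
        · simp [hj]
        · exact mul_le_mul_of_nonneg_left (hN j hj) (norm_nonneg _)
    _ ≤ ‖M‖ * c := by
        rw [← Finset.sum_mul]
        exact mul_le_mul_of_nonneg_right (sum_norm_apply_le_linfty_opNorm M i) hc

theorem pow_apply_eq_zero_of_pow_succ_apply_eq_zero {R : Type*} [Semiring R]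
    [Subsingleton (AddUnits R)] [NoZeroDivisors R] {A : Matrix V V R}
    {j : ℕ} {i k l : V} (hA : (A ^ (j + 1)) i k = 0) (hil : A i l ≠ 0) : (A ^ j) l k = 0 := by
  rw [pow_succ', mul_apply, Finset.sum_eq_zero_iff] at hA
  exact (mul_eq_zero.mp (hA l (Finset.mem_univ l))).resolve_left hil

end Matrix

theorem norm_le_mul_exp_of_hasDerivAt_mul {R : Type*} [NormedRing R] [NormedAlgebra ℝ R]
    {H U : ℝ → R} {K a b : ℝ} (hH : ∀ x ∈ Icc a b, ‖H x‖ ≤ K)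
    (hU : ∀ x ∈ Icc a b, HasDerivAt U (H x * U x) x) :
    ∀ x ∈ Icc a b, ‖U x‖ ≤ ‖U a‖ * Real.exp (K * (x - a)) := by
  intro x hx
  have := norm_le_gronwallBound_of_norm_deriv_right_le (ε := 0)
    (fun y hy => (hU y hy).continuousAt.continuousWithinAt)
    (fun y hy => (hU y (Ico_subset_Icc_self hy)).hasDerivWithinAt) le_rfl
    (fun y hy => (norm_mul_le _ _).trans (by
      rw [add_zero]; gcongr; exact hH y (Ico_subset_Icc_self hy))) x hx
  rwa [gronwallBound_ε0] at this

noncomputable def superexpBound (K : ℝ) (d : ℕ) (x : ℝ) : ℝ :=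
  Real.exp (K * x) * (K * x) ^ d / d !

theorem superexpBound_nonneg {K x : ℝ} (hK : 0 ≤ K) (hx : 0 ≤ x) (d : ℕ) :
    0 ≤ superexpBound K d x := by
  unfold superexpBound
  positivity

theorem superexpBound_zero (K x : ℝ) : superexpBound K 0 x = Real.exp (K * x) := by
  simp [superexpBound]

theorem hasDerivAt_superexpBound_succ (K : ℝ) (d : ℕ) (x : ℝ) :
    HasDerivAt (superexpBound K (d + 1))
      (K * superexpBound K (d + 1) x + K * superexpBound K d x) x := by
  have hlin : HasDerivAt (fun y => K * y) K x := by simpa using (hasDerivAt_id x).const_mul K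
  have := (((Real.hasDerivAt_exp _).comp x hlin).mul (hlin.pow (d + 1))).div_const
    ((d + 1)! : ℝ)
  refine this.congr_deriv ?_
  simp only [superexpBound, Function.comp_apply, Pi.pow_apply, Nat.factorial_succ, Nat.cast_mul,
    Nat.add_sub_cancel]
  field_simp

theorem norm_le_superexpBound_succ_of_norm_deriv_le {E : Type*} [NormedAddCommGroup E]
    [NormedSpace ℝ E]
    {f f' : ℝ → E} {K t s : ℝ} {d : ℕ} (hK : 0 ≤ K) (hts : t ≤ s) (hft : f t = 0)
    (hf : ∀ r ∈ Icc t s, HasDerivAt f (f' r) r)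
    (hf' : ∀ r ∈ Ico t s, ‖f' r‖ ≤ K * superexpBound K d (r - t)) :
    ‖f s‖ ≤ superexpBound K (d + 1) (s - t) :=
  image_norm_le_of_norm_deriv_right_le_deriv_boundary
    (fun r hr => (hf r hr).continuousAt.continuousWithinAt)
    (fun r hr => (hf r (Ico_subset_Icc_self hr)).hasDerivWithinAt)
    (by simp [hft, superexpBound])
    (fun r => (hasDerivAt_superexpBound_succ K d (r - t)).comp_sub_const r t)
    (fun r hr => (hf' r hr).trans (le_add_of_nonneg_left
      (mul_nonneg hK (superexpBound_nonneg hK (sub_nonneg.2 hr.1) _))))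
    (right_mem_Icc.2 hts)

theorem norm_apply_le_superexpBound {V : Type*} [Fintype V] [DecidableEq V]
    {H U : ℝ → Matrix V V ℂ} {A : Matrix V V ℕ} {K t t' : ℝ} (hK : 0 ≤ K)
    (hH : ∀ s ∈ Icc t t', ‖H s‖ ≤ K) (hHA : ∀ s ∈ Icc t t', ∀ i j, A i j = 0 → H s i j = 0)
    (hU0 : U t = 1) (hU : ∀ s ∈ Icc t t', HasDerivAt U (H s * U s) s) (d : ℕ) :
    ∀ ω α, (∀ j < d, (A ^ j) ω α = 0) →
      ∀ s ∈ Icc t t', ‖U s ω α‖ ≤ superexpBound K d (s - t) := by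
  induction d with
  | zero =>
    intro ω α _ s hs
    have : Nonempty V := ⟨ω⟩
    calc ‖U s ω α‖ ≤ ‖U s‖ := norm_apply_le_linfty_opNorm _ _ _
      _ ≤ ‖U t‖ * Real.exp (K * (s - t)) := norm_le_mul_exp_of_hasDerivAt_mul hH hU s hs
      _ = superexpBound K 0 (s - t) := by rw [hU0, norm_one, one_mul, superexpBound_zero]
  | succ d ih =>
    intro ω α hd s hs
    have hωα : ω ≠ α := by
      rintro rfl
      simpa using hd 0 d.succ_pos
    have hsub : Icc t s ⊆ Icc t t' := Icc_subset_Icc_right hs.2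
    refine norm_le_superexpBound_succ_of_norm_deriv_le hK hs.1 (f := fun r => U r ω α)
      (by simp [hU0, hωα]) (fun r hr => hasDerivAt_pi.1 (hasDerivAt_pi.1 (hU r (hsub hr)) ω) α)
      fun r hr => ?_
    have hr : r ∈ Icc t t' := hsub (Ico_subset_Icc_self hr)
    have hB : 0 ≤ superexpBound K d (r - t) := superexpBound_nonneg hK (sub_nonneg.2 hr.1) d
    have hfar : ∀ β, H r ω β ≠ 0 → ‖U r β α‖ ≤ superexpBound K d (r - t) := fun β hβ =>
      ih β α (fun j hj => pow_apply_eq_zero_of_pow_succ_apply_eq_zero (hd (j + 1) (by omega))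
        fun hA => hβ (hHA r hr ω β hA)) r hr
    exact (norm_mul_apply_le_of_forall_ne_zero hB hfar).trans
      (mul_le_mul_of_nonneg_right (hH r hr) hB)

theorem timeOrderedExp_superexponential_decay_general {V : Type*} [Fintype V] [DecidableEq V]
    (a₀ a₁ h : ℝ) (Δ : ℕ)
    (H : ℝ → Matrix V V ℂ)
    (A : Matrix V V ℕ)
    (hA1 : ∀ β α, (∃ s ∈ Set.Icc a₀ a₁, H s β α ≠ 0) → A β α = 1)
    (hΔin : ∀ β, ∑ α, A β α ≤ Δ)
    (hb : ∀ s ∈ Set.Icc a₀ a₁, ∀ β α, ‖H s β α‖ ≤ h)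
    (hh : 0 ≤ h)
    (t t' : ℝ) (ht : t ∈ Set.Icc a₀ a₁) (ht' : t' ∈ Set.Icc a₀ a₁) (htt : t ≤ t')
    (U : ℝ → Matrix V V ℂ) (hU0 : U t = 1)
    (hU : ∀ s ∈ Set.Icc a₀ a₁, HasDerivAt U (H s * U s) s)
    (α ω : V) :
    ‖U t' ω α‖
      ≤ Real.exp ((Δ : ℝ) * h * (t' - t))
          * ((Δ : ℝ) * h * (t' - t)) ^ sInf {j : ℕ | (A ^ j) ω α ≠ 0}
          / (Nat.factorial (sInf {j : ℕ | (A ^ j) ω α ≠ 0}) : ℝ) := by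
  have hsub : Icc t t' ⊆ Icc a₀ a₁ := Icc_subset_Icc ht.1 ht'.2
  have hHA : ∀ s ∈ Icc t t', ∀ i j, A i j = 0 → H s i j = 0 := fun s hs i j hA => by
    by_contra hne
    simpa [hA] using hA1 i j ⟨s, hsub hs, hne⟩
  have hentry : ∀ s ∈ Icc t t', ∀ i j, ‖H s i j‖ ≤ A i j * h := fun s hs i j => by
    by_cases hzero : H s i j = 0
    · simp only [hzero, norm_zero]
      positivity
    · simpa [hA1 i j ⟨s, hsub hs, hzero⟩] using hb s (hsub hs) i j
  have hH : ∀ s ∈ Icc t t', ‖H s‖ ≤ Δ * h := fun s hs =>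
    linfty_opNorm_le_of_sum_norm_apply_le (by positivity) fun i =>
      calc ∑ j, ‖H s i j‖ ≤ ∑ j, (A i j : ℝ) * h := Finset.sum_le_sum fun j _ => hentry s hs i j
        _ ≤ Δ * h := by
          rw [← Finset.sum_mul]
          gcongr
          exact_mod_cast hΔin i
  exact norm_apply_le_superexpBound (by positivity) hH hHA hU0 (fun s hs => hU s (hsub hs)) _ ω α
    (fun j hj => by simpa using Nat.notMem_of_lt_sInf hj) t' ⟨htt, le_rfl⟩

/-- super-exponential decay of the entries of the time-ordered
exponential of a sparse matrix whose sparsity graph has maximum degree `Δ`: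
`|U(t',t)_{ωα}| ≤ e^{Δh(t'-t)} (Δh(t'-t))^d / d!` where `d = d(α,ω)`. -/
theorem timeOrderedExp_superexponential_decay {V : Type*} [Fintype V] [DecidableEq V]
    (a₀ a₁ h : ℝ) (Δ : ℕ)
    (H : ℝ → Matrix V V ℂ) (hH : ContinuousOn H (Set.Icc a₀ a₁))
    (A : Matrix V V ℕ)
    (hA0 : ∀ β α, (∀ s ∈ Set.Icc a₀ a₁, H s β α = 0) → A β α = 0)
    (hA1 : ∀ β α, (∃ s ∈ Set.Icc a₀ a₁, H s β α ≠ 0) → A β α = 1)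
    (hΔout : ∀ α, ∑ β, A β α ≤ Δ)
    (hΔin : ∀ β, ∑ α, A β α ≤ Δ)
    (hb : ∀ s ∈ Set.Icc a₀ a₁, ∀ β α, ‖H s β α‖ ≤ h)
    (hh : 0 ≤ h)
    (t t' : ℝ) (ht : t ∈ Set.Icc a₀ a₁) (ht' : t' ∈ Set.Icc a₀ a₁) (htt : t ≤ t')
    (U : ℝ → Matrix V V ℂ) (hU0 : U t = 1)
    (hU : ∀ s ∈ Set.Icc a₀ a₁, HasDerivAt U (H s * U s) s)
    (α ω : V) :
    ‖U t' ω α‖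
      ≤ Real.exp ((Δ : ℝ) * h * (t' - t))
          * ((Δ : ℝ) * h * (t' - t)) ^ sInf {j : ℕ | (A ^ j) ω α ≠ 0}
          / (Nat.factorial (sInf {j : ℕ | (A ^ j) ω α ≠ 0}) : ℝ) :=
  timeOrderedExp_superexponential_decay_general a₀ a₁ h Δ H A hA1 hΔin hb hh t t' ht ht' htt U hU0
    hU α ω
end
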